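/- arXiv:2510.20716 — 3 statements merged into one kernel-verified Lean document; each statement's English description precedes it below -/
import Mathlib

section
/- Local coercivity for Young ODEs with small driver: Let m, n ≥ 1, γ ∈ (1/2,1], θ ∈ (1/γ − 1, 1], p ∈ (1,∞). There exist ε, δ, r > 0, depending only on m, n, p, γ, θ, such that: for every X : [−1,0] → ℝ^n and f : ℝ^m → L(ℝ^n,ℝ^m) with ‖f‖_{C^θ} · [X]_γ ≤ r, and every Young solution φ of dφ = −φ^p dt + f(φ) dX on [−1,0] with sup_{t∈[−1,0]} |φ_t| ≤ ε, one has |φ_0| < ε − δ. -/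
open MeasureTheory Real Set

noncomputable section

namespace Stmt8

/-- The set of Hölder ratios `‖X t − X s‖ / |t−s|^γ` over `s ≠ t` in `I`. -/
def holderSet (γ : ℝ) (I : Set ℝ) {F : Type*} [NormedAddCommGroup F] (X : ℝ → F) :
    Set ℝ :=
  {v | ∃ s ∈ I, ∃ t ∈ I, s ≠ t ∧ v = ‖X t - X s‖ / |t - s| ^ γ}

/-- The γ-Hölder seminorm `[X]_{γ;I}` of `X` restricted to the interval `I`. -/
def holderSemi (γ : ℝ) (I : Set ℝ) {F : Type*} [NormedAddCommGroup F] (X : ℝ → F) : ℝ :=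
  sSup (holderSet γ I X)

/-- The set of values `‖f x‖` (for the sup norm `‖f‖_∞`). -/
def fSupSet {E F : Type*} [NormedAddCommGroup E] [NormedAddCommGroup F] (f : E → F) :
    Set ℝ :=
  Set.range fun x => ‖f x‖

/-- `‖f‖_∞`. -/
def fSup {E F : Type*} [NormedAddCommGroup E] [NormedAddCommGroup F] (f : E → F) : ℝ :=
  sSup (fSupSet f)

/-- The set of Hölder ratios `‖f x − f y‖ / ‖x−y‖^θ` over `x ≠ y` (for `[f]_θ`). -/
def fHolderSet (θ : ℝ) {E F : Type*} [NormedAddCommGroup E] [NormedAddCommGroup F]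
    (f : E → F) : Set ℝ :=
  {v | ∃ x y : E, x ≠ y ∧ v = ‖f x - f y‖ / ‖x - y‖ ^ θ}

/-- `[f]_θ`. -/
def fHolder (θ : ℝ) {E F : Type*} [NormedAddCommGroup E] [NormedAddCommGroup F]
    (f : E → F) : ℝ :=
  sSup (fHolderSet θ f)

/-- `‖f‖_{C^θ} = ‖f‖_∞ + [f]_θ`. -/
def fC (θ : ℝ) {E F : Type*} [NormedAddCommGroup E] [NormedAddCommGroup F] (f : E → F) :
    ℝ :=
  fSup f + fHolder θ f

/-- `φ` is a Young solution of `dφ = −φ^p dt + f(φ) dX` on `[−1,0]`: `φ` is continuous and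
there exist a continuous `I : [−1,0] → ℝ^m` and `C₀ ≥ 0` with
`φ_t − φ_s = −∫_s^t φ_u^p du + (I_t − I_s)` and
`‖I_t − I_s − f(φ_s)(X_t − X_s)‖ ≤ C₀ |t−s|^{γ(1+θ)}` for all `−1 ≤ s ≤ t ≤ 0`,
where `x^p := |x|^{p−1} x`. -/
def YoungSol (m n : ℕ) (p γ θ : ℝ) (X : ℝ → EuclideanSpace ℝ (Fin n))
    (f : EuclideanSpace ℝ (Fin m) →
      (EuclideanSpace ℝ (Fin n) →L[ℝ] EuclideanSpace ℝ (Fin m)))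
    (φ : ℝ → EuclideanSpace ℝ (Fin m)) : Prop :=
  ContinuousOn φ (Set.Icc (-1 : ℝ) 0) ∧
  ∃ I : ℝ → EuclideanSpace ℝ (Fin m), ContinuousOn I (Set.Icc (-1 : ℝ) 0) ∧
    ∃ C₀ : ℝ, 0 ≤ C₀ ∧
      ∀ s t : ℝ, -1 ≤ s → s ≤ t → t ≤ 0 →
        (φ t - φ s = -(∫ u in s..t, (‖φ u‖ ^ (p - 1)) • φ u) + (I t - I s)) ∧
        ‖I t - I s - f (φ s) (X t - X s)‖ ≤ C₀ * (t - s) ^ (γ * (1 + θ))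


lemma aux_subadd {x y q : ℝ} (hx : 0 ≤ x) (hy : 0 ≤ y) (hq0 : 0 ≤ q) (hq1 : q ≤ 1) :
    (x + y) ^ q ≤ x ^ q + y ^ q := by
  have h := NNReal.rpow_add_le_add_rpow x.toNNReal y.toNNReal hq0 hq1
  have h2 := NNReal.coe_le_coe.2 h
  push_cast [NNReal.coe_rpow] at h2
  rwa [Real.coe_toNNReal x hx, Real.coe_toNNReal y hy] at h2

lemma aux_rpow_sub_le {a b q : ℝ} (hb : 0 ≤ b) (hba : b ≤ a) (hq0 : 0 ≤ q) (hq1 : q ≤ 1) :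
    a ^ q - b ^ q ≤ (a - b) ^ q := by
  have h := aux_subadd (x := a - b) (y := b) (by linarith) hb hq0 hq1
  rw [sub_add_cancel] at h
  linarith

lemma aux_rpow_lip {q : ℝ} (hq : 1 ≤ q) {a b : ℝ} (hb : 0 ≤ b) (hba : b ≤ a) (ha : a ≤ 1) :
    a ^ q - b ^ q ≤ q * (a - b) := by
  have H := norm_image_sub_le_of_norm_deriv_le_segment'
    (f := fun x : ℝ => x ^ q) (f' := fun x : ℝ => q * x ^ (q - 1)) (a := b) (b := a) (C := q)
    (fun x _ => (Real.hasDerivAt_rpow_const (Or.inr hq)).hasDerivWithinAt)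
    (fun x hx => by
      have hx0 : (0:ℝ) ≤ x := le_trans hb hx.1
      have h0 : (0:ℝ) ≤ x ^ (q - 1) := Real.rpow_nonneg hx0 _
      rw [Real.norm_eq_abs, abs_of_nonneg (by positivity)]
      have h1 : x ^ (q - 1) ≤ 1 :=
        Real.rpow_le_one hx0 (hx.2.le.trans ha) (by linarith)
      show q * x ^ (q - 1) ≤ q
      nlinarith)
    a (right_mem_Icc.2 hba)
  have := (le_abs_self ((fun x : ℝ => x ^ q) a - (fun x : ℝ => x ^ q) b)).trans
    (by simpa [Real.norm_eq_abs] using H)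
  simpa using this

lemma aux_abs_rpow_sub {q a b : ℝ} (hq : 0 < q) (ha0 : 0 ≤ a) (ha1 : a ≤ 1)
    (hb0 : 0 ≤ b) (hb1 : b ≤ 1) : |a ^ q - b ^ q| ≤ |a - b| ^ q + q * |a - b| := by
  wlog hba : b ≤ a with Hw
  · have := Hw hq hb0 hb1 ha0 ha1 (le_of_not_ge hba)
    rwa [abs_sub_comm, abs_sub_comm b a] at this
  rw [abs_of_nonneg (sub_nonneg.2 (Real.rpow_le_rpow hb0 hba hq.le)),
    abs_of_nonneg (sub_nonneg.2 hba)]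
  rcases le_or_gt q 1 with h | h
  · have := aux_rpow_sub_le hb0 hba hq.le h
    nlinarith [sub_nonneg.2 hba]
  · have := aux_rpow_lip h.le hb0 hba ha1
    have h2 : (0:ℝ) ≤ (a - b) ^ q := Real.rpow_nonneg (by linarith) q
    linarith

lemma aux_rpow_le_one_add {x θ : ℝ} (hx : 0 ≤ x) (hθ0 : 0 ≤ θ) (hθ1 : θ ≤ 1) :
    x ^ θ ≤ 1 + x := by
  rcases le_or_gt x 1 with h | h
  · have := Real.rpow_le_one hx h hθ0
    linarith
  · have := Real.rpow_le_rpow_of_exponent_le h.le hθ1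
    rw [Real.rpow_one] at this
    linarith

set_option maxHeartbeats 2000000 in
/-- **Local coercivity for Young ODEs with small driver.** -/
theorem young_local_coercivity
    (m n : ℕ) (hm : 1 ≤ m) (hn : 1 ≤ n) (γ θ p : ℝ)
    (hγ1 : (1 : ℝ) / 2 < γ) (hγ2 : γ ≤ 1) (hθ1 : 1 / γ - 1 < θ) (hθ2 : θ ≤ 1)
    (hp : 1 < p) :
    ∃ ε : ℝ, 0 < ε ∧ ∃ δ : ℝ, 0 < δ ∧ ∃ r : ℝ, 0 < r ∧
      ∀ (X : ℝ → EuclideanSpace ℝ (Fin n))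
        (f : EuclideanSpace ℝ (Fin m) →
          (EuclideanSpace ℝ (Fin n) →L[ℝ] EuclideanSpace ℝ (Fin m)))
        (φ : ℝ → EuclideanSpace ℝ (Fin m)),
        BddAbove (holderSet γ (Set.Icc (-1 : ℝ) 0) X) →
        BddAbove (fSupSet f) → BddAbove (fHolderSet θ f) →
        fC θ f * holderSemi γ (Set.Icc (-1 : ℝ) 0) X ≤ r →
        YoungSol m n p γ θ X f φ →
        (∀ t ∈ Set.Icc (-1 : ℝ) 0, ‖φ t‖ ≤ ε) →
        ‖φ 0‖ < ε - δ := by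
  classical
  have hγ0 : (0:ℝ) < γ := by linarith
  have hθ0 : (0:ℝ) < θ := by
    have h1 : (1:ℝ) ≤ 1 / γ := by rw [le_div_iff₀ hγ0]; linarith
    linarith
  have hβ1 : 1 < γ * (1 + θ) := by
    have h : 1 / γ < 1 + θ := by linarith
    calc (1:ℝ) = γ * (1/γ) := by field_simp
    _ < γ * (1 + θ) := (mul_lt_mul_iff_right₀ hγ0).2 h
  have hβ0 : 0 < γ * (1 + θ) := by linarith
  have hγβ : γ ≤ γ * (1 + θ) := by nlinarith
  have h2β0 : (0:ℝ) < (2:ℝ) ^ (γ * (1 + θ)) := Real.rpow_pos_of_pos two_pos _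
  have h2β2 : (2:ℝ) < (2:ℝ) ^ (γ * (1 + θ)) := by
    have h := Real.rpow_lt_rpow_of_exponent_lt (by norm_num : (1:ℝ) < 2) hβ1
    rwa [Real.rpow_one] at h
  have hκ0 : 0 < 1 - 2 / (2:ℝ) ^ (γ * (1 + θ)) := by
    have h : 2 / (2:ℝ) ^ (γ * (1 + θ)) < 1 := (div_lt_one h2β0).2 h2β2
    linarith
  have hκ1 : 1 - 2 / (2:ℝ) ^ (γ * (1 + θ)) ≤ 1 := by
    have h : 0 ≤ 2 / (2:ℝ) ^ (γ * (1 + θ)) := by positivity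
    linarith
  have hp1 : (0:ℝ) < p - 1 := by linarith
  have h2p0 : (0:ℝ) < 2 ^ p := Real.rpow_pos_of_pos two_pos _
  -- eventual smallness in ε
  have hev : ∀ K a η : ℝ, 0 < a → 0 < η →
      ∀ᶠ ε in nhdsWithin (0:ℝ) (Set.Ioi 0), K * ε ^ a < η := by
    intro K a η ha hη
    have hc : ContinuousAt (fun ε : ℝ => K * ε ^ a) 0 :=
      (Real.continuousAt_rpow_const 0 a (Or.inr ha.le)).const_mul K
    have h0 : Filter.Tendsto (fun ε : ℝ => K * ε ^ a) (nhds 0) (nhds 0) := by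
      have h := hc.tendsto
      rwa [Real.zero_rpow ha.ne', mul_zero] at h
    exact (h0.eventually_lt_const hη).filter_mono nhdsWithin_le_nhds
  obtain ⟨ε, hε0, hA', hεh, h1', h2', h3'⟩ :=
    (eventually_mem_nhdsWithin.and ((hev 2 (p-1) (1/8) hp1 (by norm_num)).and
      ((hev 1 1 (1/2) one_pos (by norm_num)).and
      ((hev 1 (p-1) (1/(24*(2:ℝ)^p)) hp1 (by positivity)).and
      ((hev ((2:ℝ)^(p-1)) ((p-1)^2) (1/(12*(2:ℝ)^p)) (pow_pos hp1 2)
          (by positivity)).and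
       (hev (2*(p-1)) 1 (1/(12*(2:ℝ)^p)) one_pos (by positivity))))))).exists
  rw [Real.rpow_one, one_mul] at hεh
  rw [Real.rpow_one] at h3'
  rw [one_mul] at h1'
  replace hε0 : (0:ℝ) < ε := hε0
  have hε1 : ε ≤ 1 := by linarith
  have hεp0 : 0 < ε ^ p := Real.rpow_pos_of_pos hε0 p
  have hεp1' : ε ^ p ≤ 1 := Real.rpow_le_one hε0.le hε1 (by linarith)
  have hεpm0 : 0 ≤ ε ^ (p-1) := Real.rpow_nonneg hε0.le _
  have hsplitp : ε ^ p = ε ^ (p-1) * ε := by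
    have h := Real.rpow_add_one hε0.ne' (p-1)
    rw [sub_add_cancel] at h
    exact h
  have h2εp : 2 * ε ^ p ≤ ε / 8 := by
    calc 2 * ε ^ p = (2 * ε ^ (p-1)) * ε := by rw [hsplitp]; ring
    _ ≤ (1/8) * ε := mul_le_mul_of_nonneg_right hA'.le hε0.le
    _ = ε/8 := by ring
  have hc0 : (0:ℝ) < (ε/2)^p := Real.rpow_pos_of_pos (by linarith) p
  refine ⟨ε, hε0, (ε/2)^p/4, by positivity, min (1 - 2 / (2:ℝ) ^ (γ * (1 + θ)))
      (min 1 ((1 - 2 / (2:ℝ) ^ (γ * (1 + θ))) * ((ε/2)^p) / 16)),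
      lt_min hκ0 (lt_min one_pos (by positivity)), ?_⟩
  intro X f φ hBX hBs hBh hsmall hsol hφ
  set c : ℝ := (ε/2)^p with hcdef
  set K : ℝ := 1 - 2 / (2:ℝ) ^ (γ * (1 + θ)) with hKdef
  set r : ℝ := min K (min 1 (K * c / 16)) with hrdef
  clear_value c K r
  have hr0 : 0 < r := by
    rw [hrdef]
    exact lt_min hκ0 (lt_min one_pos (div_pos (mul_pos hκ0 hc0) (by norm_num)))
  have hrK : r ≤ K := by rw [hrdef]; exact min_le_left _ _
  have hr1 : r ≤ 1 := by rw [hrdef]; exact (min_le_right _ _).trans (min_le_left _ _)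
  have hrc : r ≤ K * c / 16 := by
    rw [hrdef]; exact (min_le_right _ _).trans (min_le_right _ _)
  have hcε : c ≤ ε^p := by
    rw [hcdef]; exact Real.rpow_le_rpow (by linarith) (by linarith) (by linarith)
  have hcε2 : c ≤ ε/2 := by
    have h := Real.rpow_le_rpow_of_exponent_ge' (x := ε/2) (by linarith) (by linarith)
      (by norm_num) (by linarith : (1:ℝ) ≤ p)
    rw [Real.rpow_one] at h
    rw [hcdef]
    exact h
  -- basic norm facts
  have hmem0 : (0:ℝ) ∈ Set.Icc (-1:ℝ) 0 := by constructor <;> norm_num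
  have hmem1 : (-1:ℝ) ∈ Set.Icc (-1:ℝ) 0 := by constructor <;> norm_num
  have hH0 : 0 ≤ holderSemi γ (Set.Icc (-1:ℝ) 0) X := by
    have hmem : ‖X 0 - X (-1)‖ / |(0:ℝ) - (-1)| ^ γ ∈ holderSet γ (Set.Icc (-1:ℝ) 0) X :=
      ⟨-1, hmem1, 0, hmem0, by norm_num, rfl⟩
    exact le_trans (by positivity) (le_csSup hBX hmem)
  have hfx : ∀ x, ‖f x‖ ≤ fSup f := fun x => le_csSup hBs ⟨x, rfl⟩
  have hKf0 : 0 ≤ fSup f := le_trans (norm_nonneg _) (hfx 0)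
  have hJf0 : 0 ≤ fHolder θ f := by
    have hx : (EuclideanSpace.single (⟨0, hm⟩ : Fin m) (1:ℝ)) ≠ 0 := by
      intro h
      have h2 : ‖(EuclideanSpace.single (⟨0, hm⟩ : Fin m) (1:ℝ))‖ = 0 := by
        rw [h, norm_zero]
      rw [EuclideanSpace.norm_single] at h2
      norm_num at h2
    have hmem : ‖f (EuclideanSpace.single (⟨0, hm⟩ : Fin m) (1:ℝ)) - f 0‖ /
        ‖(EuclideanSpace.single (⟨0, hm⟩ : Fin m) (1:ℝ)) - 0‖ ^ θ ∈ fHolderSet θ f :=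
      ⟨_, 0, hx, rfl⟩
    exact le_trans (by positivity) (le_csSup hBh hmem)
  have hfCeq : fC θ f = fSup f + fHolder θ f := rfl
  have hKH : fSup f * holderSemi γ (Set.Icc (-1:ℝ) 0) X ≤ r := by
    have h := hsmall
    rw [hfCeq, add_mul] at h
    linarith [mul_nonneg hJf0 hH0]
  have hJH : fHolder θ f * holderSemi γ (Set.Icc (-1:ℝ) 0) X ≤ r := by
    have h := hsmall
    rw [hfCeq, add_mul] at h
    linarith [mul_nonneg hKf0 hH0]
  have hXb : ∀ s t : ℝ, s ∈ Set.Icc (-1:ℝ) 0 → t ∈ Set.Icc (-1:ℝ) 0 → s ≤ t →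
      ‖X t - X s‖ ≤ holderSemi γ (Set.Icc (-1:ℝ) 0) X * (t - s) ^ γ := by
    intro s t hs ht hst
    rcases eq_or_lt_of_le hst with h | h
    · subst h; simp [Real.zero_rpow hγ0.ne']
    · have hpos : 0 < (t - s) ^ γ := Real.rpow_pos_of_pos (by linarith) γ
      have hmem : ‖X t - X s‖ / |t - s| ^ γ ∈ holderSet γ (Set.Icc (-1:ℝ) 0) X :=
        ⟨s, hs, t, ht, ne_of_lt h, rfl⟩
      have hle := le_csSup hBX hmem
      rw [abs_of_pos (by linarith : (0:ℝ) < t - s)] at hle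
      calc ‖X t - X s‖ = (‖X t - X s‖ / (t-s)^γ) * (t-s)^γ := by field_simp
      _ ≤ _ := mul_le_mul_of_nonneg_right hle hpos.le
  have hfholder : ∀ x y, ‖f x - f y‖ ≤ fHolder θ f * ‖x - y‖ ^ θ := by
    intro x y
    rcases eq_or_ne x y with h | h
    · subst h; simp [Real.zero_rpow hθ0.ne']
    · have hpos : 0 < ‖x - y‖ ^ θ := Real.rpow_pos_of_pos (norm_sub_pos_iff.2 h) θ
      have hle := le_csSup hBh ⟨x, y, h, rfl⟩
      calc ‖f x - f y‖ = (‖f x - f y‖/‖x-y‖^θ) * ‖x-y‖^θ := by field_simp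
      _ ≤ _ := mul_le_mul_of_nonneg_right hle hpos.le
  obtain ⟨hφc, I, hIc, C₀, hC₀0, hsol'⟩ := hsol
  have heq : ∀ s t : ℝ, -1 ≤ s → s ≤ t → t ≤ 0 →
      φ t - φ s = -(∫ u in s..t, (‖φ u‖ ^ (p - 1)) • φ u) + (I t - I s) :=
    fun s t hs hst ht => (hsol' s t hs hst ht).1
  have hE0 : ∀ s t : ℝ, -1 ≤ s → s ≤ t → t ≤ 0 →
      ‖I t - I s - (f (φ s)) (X t - X s)‖ ≤ C₀ * (t - s) ^ (γ * (1 + θ)) :=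
    fun s t hs hst ht => (hsol' s t hs hst ht).2
  have hgb : ∀ u, u ∈ Set.Icc (-1:ℝ) 0 → ‖(‖φ u‖ ^ (p - 1)) • φ u‖ ≤ ε ^ p := by
    intro u hu
    rw [norm_smul, Real.norm_eq_abs, abs_of_nonneg (Real.rpow_nonneg (norm_nonneg _) _)]
    calc ‖φ u‖ ^ (p-1) * ‖φ u‖ ≤ ε ^ (p-1) * ε :=
          mul_le_mul (Real.rpow_le_rpow (norm_nonneg _) (hφ u hu) (by linarith))
            (hφ u hu) (norm_nonneg _) hεpm0
    _ = ε ^ p := hsplitp.symm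
  -- oscillation bound under an admissibility hypothesis
  have hosc : ∀ G : ℝ, 0 ≤ G →
      (∀ s t : ℝ, -1 ≤ s → s ≤ t → t ≤ 0 →
        ‖I t - I s - (f (φ s)) (X t - X s)‖ ≤ G * (t - s) ^ (γ * (1 + θ))) →
      ∀ s t : ℝ, -1 ≤ s → s ≤ t → t ≤ 0 →
        ‖φ t - φ s‖ ≤ (ε ^ p + r + G) * (t - s) ^ γ := by
    intro G hG0 hadm s t hs hst ht
    have hts0 : (0:ℝ) ≤ t - s := by linarith
    have hts1 : t - s ≤ 1 := by linarith
    have hint : ‖∫ u in s..t, (‖φ u‖ ^ (p - 1)) • φ u‖ ≤ ε ^ p * (t - s) := by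
      have h := intervalIntegral.norm_integral_le_of_norm_le_const (C := ε ^ p)
        (a := s) (b := t) (f := fun u => (‖φ u‖ ^ (p - 1)) • φ u) ?_
      · rwa [abs_of_nonneg hts0] at h
      · intro u hu
        rw [Set.uIoc_of_le hst] at hu
        exact hgb u ⟨by linarith [hu.1], le_trans hu.2 ht⟩
    have hfX : ‖(f (φ s)) (X t - X s)‖ ≤ r * (t - s) ^ γ := by
      calc ‖(f (φ s)) (X t - X s)‖ ≤ ‖f (φ s)‖ * ‖X t - X s‖ :=
            ContinuousLinearMap.le_opNorm _ _
      _ ≤ fSup f * (holderSemi γ (Set.Icc (-1:ℝ) 0) X * (t - s) ^ γ) :=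
            mul_le_mul (hfx _) (hXb s t ⟨hs, le_trans hst ht⟩ ⟨le_trans hs hst, ht⟩ hst)
              (norm_nonneg _) hKf0
      _ = (fSup f * holderSemi γ (Set.Icc (-1:ℝ) 0) X) * (t-s)^γ := by ring
      _ ≤ r * (t-s)^γ := mul_le_mul_of_nonneg_right hKH (Real.rpow_nonneg hts0 γ)
    have hEb : ‖I t - I s - (f (φ s)) (X t - X s)‖ ≤ G * (t - s) ^ γ :=
      le_trans (hadm s t hs hst ht) (mul_le_mul_of_nonneg_left
        (Real.rpow_le_rpow_of_exponent_ge' hts0 hts1 hγ0.le hγβ) hG0)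
    have hts' : (t - s) ≤ (t - s) ^ γ := by
      have h := Real.rpow_le_rpow_of_exponent_ge' hts0 hts1 hγ0.le hγ2
      rwa [Real.rpow_one] at h
    have hkey := heq s t hs hst ht
    calc ‖φ t - φ s‖
        = ‖-(∫ u in s..t, (‖φ u‖ ^ (p - 1)) • φ u) +
            ((I t - I s - (f (φ s)) (X t - X s)) + (f (φ s)) (X t - X s))‖ := by
          rw [hkey, sub_add_cancel]
      _ ≤ ‖∫ u in s..t, (‖φ u‖ ^ (p - 1)) • φ u‖ +
            (‖I t - I s - (f (φ s)) (X t - X s)‖ + ‖(f (φ s)) (X t - X s)‖) := by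
          refine le_trans (norm_add_le _ _) ?_
          rw [norm_neg]
          exact add_le_add_right (norm_add_le _ _) _
      _ ≤ ε ^ p * (t - s) + (G * (t-s)^γ + r * (t-s)^γ) :=
          add_le_add hint (add_le_add hEb hfX)
      _ ≤ ε ^ p * (t-s)^γ + (G * (t-s)^γ + r * (t-s)^γ) := by
          have h := mul_le_mul_of_nonneg_left hts' hεp0.le
          linarith
      _ = (ε ^ p + r + G) * (t-s)^γ := by ring
  -- one sewing step
  have hstep : ∀ G : ℝ, 0 ≤ G →
      (∀ s t : ℝ, -1 ≤ s → s ≤ t → t ≤ 0 →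
        ‖I t - I s - (f (φ s)) (X t - X s)‖ ≤ G * (t - s) ^ (γ * (1 + θ))) →
      ∀ s t : ℝ, -1 ≤ s → s ≤ t → t ≤ 0 →
        ‖I t - I s - (f (φ s)) (X t - X s)‖ ≤
          ((2*G + r*(ε^p + r + G)^θ)/(2:ℝ)^(γ * (1 + θ))) * (t - s) ^ (γ * (1 + θ)) := by
    intro G hG0 hadm s t hs hst ht
    rcases eq_or_lt_of_le hst with h | hlt
    · subst h
      simp [Real.zero_rpow hβ0.ne']
    · have hsu : s ≤ (s+t)/2 := by linarith
      have hut : (s+t)/2 ≤ t := by linarith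
      have hu1 : -1 ≤ (s+t)/2 := le_trans hs hsu
      have hu0 : (s+t)/2 ≤ 0 := le_trans hut ht
      have hus : (s+t)/2 - s = (t - s)/2 := by ring
      have htu : t - (s+t)/2 = (t - s)/2 := by ring
      have hL0 : 0 < (t - s)/2 := by linarith
      have hL1 : (t-s)/2 ≤ 1 := by linarith
      have hM0 : (0:ℝ) ≤ ε^p + r + G := by linarith
      have hiden : I t - I s - (f (φ s)) (X t - X s)
          = (I ((s+t)/2) - I s - (f (φ s)) (X ((s+t)/2) - X s)) +
            (I t - I ((s+t)/2) - (f (φ ((s+t)/2))) (X t - X ((s+t)/2))) +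
            ((f (φ ((s+t)/2)) - f (φ s)) (X t - X ((s+t)/2))) := by
        simp only [ContinuousLinearMap.sub_apply, map_sub]
        abel
      have hφus : ‖φ ((s+t)/2) - φ s‖ ≤ (ε^p + r + G) * ((t-s)/2)^γ := by
        have h := hosc G hG0 hadm s ((s+t)/2) hs hsu hu0
        rwa [hus] at h
      have hcross : ‖(f (φ ((s+t)/2)) - f (φ s)) (X t - X ((s+t)/2))‖ ≤
          r * (ε^p + r + G)^θ * ((t-s)/2)^(γ * (1 + θ)) := by
        calc ‖(f (φ ((s+t)/2)) - f (φ s)) (X t - X ((s+t)/2))‖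
            ≤ ‖f (φ ((s+t)/2)) - f (φ s)‖ * ‖X t - X ((s+t)/2)‖ :=
              ContinuousLinearMap.le_opNorm _ _
          _ ≤ (fHolder θ f * ‖φ ((s+t)/2) - φ s‖^θ) *
              (holderSemi γ (Set.Icc (-1:ℝ) 0) X * ((t-s)/2)^γ) := by
              refine mul_le_mul (hfholder _ _) ?_ (norm_nonneg _)
                (mul_nonneg hJf0 (Real.rpow_nonneg (norm_nonneg _) _))
              have h := hXb ((s+t)/2) t ⟨hu1, hu0⟩ ⟨le_trans hu1 hut, ht⟩ hut
              rwa [htu] at h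
          _ ≤ (fHolder θ f * ((ε^p+r+G)^θ * (((t-s)/2)^γ)^θ)) *
              (holderSemi γ (Set.Icc (-1:ℝ) 0) X * ((t-s)/2)^γ) := by
              refine mul_le_mul_of_nonneg_right ?_
                (mul_nonneg hH0 (Real.rpow_nonneg hL0.le _))
              refine mul_le_mul_of_nonneg_left ?_ hJf0
              calc ‖φ ((s+t)/2) - φ s‖^θ ≤ ((ε^p+r+G) * ((t-s)/2)^γ)^θ :=
                    Real.rpow_le_rpow (norm_nonneg _) hφus hθ0.le
              _ = (ε^p+r+G)^θ * (((t-s)/2)^γ)^θ :=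
                    Real.mul_rpow hM0 (Real.rpow_nonneg hL0.le _)
          _ = (fHolder θ f * holderSemi γ (Set.Icc (-1:ℝ) 0) X) *
              (ε^p+r+G)^θ * ((((t-s)/2)^γ)^θ * ((t-s)/2)^γ) := by ring
          _ = (fHolder θ f * holderSemi γ (Set.Icc (-1:ℝ) 0) X) *
              (ε^p+r+G)^θ * ((t-s)/2)^(γ * (1 + θ)) := by
              rw [← Real.rpow_mul hL0.le, ← Real.rpow_add hL0]
              ring_nf
          _ ≤ r * (ε^p+r+G)^θ * ((t-s)/2)^(γ * (1 + θ)) := by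
              refine mul_le_mul_of_nonneg_right (mul_le_mul_of_nonneg_right hJH
                (Real.rpow_nonneg hM0 _)) (Real.rpow_nonneg hL0.le _)
      have hEsu := hadm s ((s+t)/2) hs hsu hu0
      have hEut := hadm ((s+t)/2) t hu1 hut ht
      rw [hus] at hEsu
      rw [htu] at hEut
      have hdiv : ((t-s)/2)^(γ * (1 + θ)) = (t-s)^(γ * (1 + θ))/(2:ℝ)^(γ * (1 + θ)) :=
        Real.div_rpow (by linarith) (by norm_num) _
      calc ‖I t - I s - (f (φ s)) (X t - X s)‖
          ≤ ‖I ((s+t)/2) - I s - (f (φ s)) (X ((s+t)/2) - X s)‖ +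
            ‖I t - I ((s+t)/2) - (f (φ ((s+t)/2))) (X t - X ((s+t)/2))‖ +
            ‖(f (φ ((s+t)/2)) - f (φ s)) (X t - X ((s+t)/2))‖ := by
            rw [hiden]; exact norm_add₃_le
        _ ≤ G * ((t-s)/2)^(γ * (1 + θ)) + G * ((t-s)/2)^(γ * (1 + θ)) +
            r*(ε^p+r+G)^θ * ((t-s)/2)^(γ * (1 + θ)) :=
            add_le_add (add_le_add hEsu hEut) hcross
        _ = (2*G + r*(ε^p+r+G)^θ) * ((t-s)/2)^(γ * (1 + θ)) := by ring
        _ = ((2*G + r*(ε^p+r+G)^θ)/(2:ℝ)^(γ * (1 + θ))) * (t-s)^(γ * (1 + θ)) := by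
            rw [hdiv]; ring
  -- infimum of admissible constants and its bound
  set A : Set ℝ := {G | 0 ≤ G ∧ ∀ s t : ℝ, -1 ≤ s → s ≤ t → t ≤ 0 →
      ‖I t - I s - (f (φ s)) (X t - X s)‖ ≤ G * (t - s) ^ (γ * (1 + θ))} with hAdef
  have hAC₀ : C₀ ∈ A := ⟨hC₀0, hE0⟩
  have hAbdd : BddBelow A := ⟨0, fun G hG => hG.1⟩
  have hGs0 : 0 ≤ sInf A := le_csInf ⟨C₀, hAC₀⟩ fun G hG => hG.1
  have hmono : ∀ G G' : ℝ, G ≤ G' → G ∈ A → 0 ≤ G' → G' ∈ A := by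
    intro G G' hle hG hG0'
    refine ⟨hG0', fun s t hs hst ht => le_trans (hG.2 s t hs hst ht) ?_⟩
    exact mul_le_mul_of_nonneg_right hle (Real.rpow_nonneg (by linarith) _)
  have hadmι : ∀ ι : ℝ, 0 < ι → (sInf A + ι) ∈ A := by
    intro ι hι
    obtain ⟨G, hGA, hGlt⟩ := exists_lt_of_csInf_lt ⟨C₀, hAC₀⟩ (lt_add_of_pos_right _ hι)
    exact hmono G _ hGlt.le hGA (by linarith)
  have hTmem : ∀ ι : ℝ, 0 < ι →
      sInf A ≤ (2*(sInf A + ι) + r*(ε^p + r + (sInf A + ι))^θ)/(2:ℝ)^(γ * (1 + θ)) := by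
    intro ι hι
    have h1 := hstep (sInf A + ι) (by linarith) (hadmι ι hι).2
    refine csInf_le hAbdd ⟨?_, h1⟩
    have h2 : 0 ≤ (ε^p + r + (sInf A + ι))^θ := Real.rpow_nonneg (by linarith) θ
    have h3 : 0 ≤ r * (ε^p + r + (sInf A + ι))^θ := mul_nonneg hr0.le h2
    apply div_nonneg ?_ h2β0.le
    linarith
  have hKW : K * (2:ℝ)^(γ * (1 + θ)) = (2:ℝ)^(γ * (1 + θ)) - 2 := by
    rw [hKdef]; field_simp
  have hGsbd : sInf A ≤ 3*r/K := by
    refine _root_.le_of_forall_pos_le_add fun ι' hι' => ?_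
    have hι : 0 < K*ι'/3 := by
      have h5 := mul_pos hκ0 hι'
      linarith only [h5]
    have h := hTmem _ hι
    rw [le_div_iff₀ h2β0] at h
    have hup : (ε^p + r + (sInf A + K*ι'/3))^θ ≤ 3 + sInf A + K*ι'/3 := by
      have h4 := aux_rpow_le_one_add (x := ε^p + r + (sInf A + K*ι'/3))
        (by linarith) hθ0.le hθ2
      linarith
    have hr' : r * (ε^p + r + (sInf A + K*ι'/3))^θ ≤ r * (3 + sInf A + K*ι'/3) :=
      mul_le_mul_of_nonneg_left hup hr0.le
    have hδ : r*(K*ι'/3) ≤ K*ι'/3 := by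
      linarith only [mul_nonneg (by linarith only [hr1] : (0:ℝ) ≤ 1 - r) hι.le]
    have e1 : sInf A * (2:ℝ)^(γ * (1 + θ)) ≤ 2*(sInf A) + K*ι' + 3*r + r*(sInf A) := by
      linarith only [h, hr', hδ]
    have e2 : sInf A * (2:ℝ)^(γ * (1 + θ)) - 2*(sInf A)
        = K * (2:ℝ)^(γ * (1 + θ)) * (sInf A) := by
      rw [hKW]; ring
    have e3 : r*(sInf A) ≤ K*(sInf A) := mul_le_mul_of_nonneg_right hrK hGs0
    have e4 : 2*(K*(sInf A)) ≤ (2:ℝ)^(γ * (1 + θ))*(K*(sInf A)) :=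
      mul_le_mul_of_nonneg_right h2β2.le (mul_nonneg hκ0.le hGs0)
    have hfin : K*(sInf A) ≤ 3*r + K*ι' := by linarith only [e1, e2, e3, e4]
    calc sInf A = (K*(sInf A))/K := by field_simp
    _ ≤ (3*r + K*ι')/K := (div_le_div_iff_of_pos_right hκ0).2 hfin
    _ = 3*r/K + ι' := by field_simp
  have hadmGs : ∀ s t : ℝ, -1 ≤ s → s ≤ t → t ≤ 0 →
      ‖I t - I s - (f (φ s)) (X t - X s)‖ ≤ sInf A * (t-s)^(γ * (1 + θ)) := by
    intro s t hs hst ht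
    refine _root_.le_of_forall_pos_le_add fun ι hι => ?_
    have h := (hadmι ι hι).2 s t hs hst ht
    have hle1 : (t-s)^(γ * (1 + θ)) ≤ 1 := Real.rpow_le_one (by linarith) (by linarith) hβ0.le
    have hle0 : 0 ≤ (t-s)^(γ * (1 + θ)) := Real.rpow_nonneg (by linarith) _
    linarith only [h, mul_le_mul_of_nonneg_left hle1 hι.le]
  have hGb : ∀ s t : ℝ, -1 ≤ s → s ≤ t → t ≤ 0 →
      ‖I t - I s - (f (φ s)) (X t - X s)‖ ≤ (3*r/K) * (t-s)^(γ * (1 + θ)) :=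
    fun s t hs hst ht => le_trans (hadmGs s t hs hst ht)
      (mul_le_mul_of_nonneg_right hGsbd (Real.rpow_nonneg (by linarith) _))
  have hG0' : (0:ℝ) ≤ 3*r/K := div_nonneg (by linarith only [hr0]) hκ0.le
  have hoscG := hosc (3*r/K) hG0' hGb
  have hrG : r + 3*r/K ≤ c/4 := by
    have h16 : 16*r ≤ K*c := by linarith only [hrc]
    have hKr : K*r ≤ r := by
      linarith only [mul_nonneg (by linarith only [hκ1] : (0:ℝ) ≤ 1-K) hr0.le]
    have heqq : r + 3*r/K = (K*r + 3*r)/K := by field_simp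
    rw [heqq, div_le_iff₀ hκ0]
    linarith only [h16, hKr]
  have hρ : ε^p + r + 3*r/K ≤ 2*ε^p := by linarith only [hrG, hcε, hc0]
  have hosc2 : ∀ s t : ℝ, -1 ≤ s → s ≤ t → t ≤ 0 → ‖φ t - φ s‖ ≤ 2*ε^p := by
    intro s t hs hst ht
    have h := hoscG s t hs hst ht
    have hle1 : (t-s)^γ ≤ 1 := Real.rpow_le_one (by linarith) (by linarith) hγ0.le
    have hM0 : (0:ℝ) ≤ ε^p + r + 3*r/K := by linarith only [hεp0, hr0, hG0']
    linarith only [h, hρ, mul_le_mul_of_nonneg_left hle1 hM0]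
  by_cases hcase : ∃ s ∈ Set.Icc (-1:ℝ) 0, ‖φ s‖ ≤ ε/2
  · obtain ⟨s, hsS, hsφ⟩ := hcase
    have hosc0 := hosc2 s 0 hsS.1 hsS.2 le_rfl
    have htri : ‖φ 0‖ ≤ ‖φ s‖ + ‖φ 0 - φ s‖ := by
      have h := norm_add_le (φ s) (φ 0 - φ s)
      have h2 : φ s + (φ 0 - φ s) = φ 0 := by abel
      rwa [h2] at h
    linarith only [hcε2, h2εp, hε0, htri, hosc0, hsφ]
  · push_neg at hcase
    have hkey := heq (-1) 0 le_rfl (by norm_num) le_rfl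
    have hgc : ContinuousOn (fun u => (‖φ u‖ ^ (p - 1)) • φ u) (Set.Icc (-1:ℝ) 0) := by
      have h1 : Continuous fun x : EuclideanSpace ℝ (Fin m) => ‖x‖ ^ (p-1) :=
        continuous_norm.rpow_const (fun x => Or.inr (by linarith))
      exact (h1.comp_continuousOn hφc).smul hφc
    have hintg : IntervalIntegrable (fun u => (‖φ u‖ ^ (p - 1)) • φ u)
        MeasureTheory.volume (-1) 0 := by
      apply ContinuousOn.intervalIntegrable
      rwa [Set.uIcc_of_le (by norm_num : (-1:ℝ) ≤ 0)]
    have hsplit : (∫ u in (-1:ℝ)..0, (‖φ u‖ ^ (p - 1)) • φ u)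
        = (∫ u in (-1:ℝ)..0, ((‖φ u‖ ^ (p - 1)) • φ u - (‖φ (-1)‖ ^ (p - 1)) • φ (-1)))
          + (‖φ (-1)‖ ^ (p - 1)) • φ (-1) := by
      rw [intervalIntegral.integral_sub hintg intervalIntegrable_const,
        intervalIntegral.integral_const]
      norm_num
    have hrep : φ 0 = (φ (-1) - (‖φ (-1)‖ ^ (p - 1)) • φ (-1))
        - (∫ u in (-1:ℝ)..0, ((‖φ u‖ ^ (p - 1)) • φ u - (‖φ (-1)‖ ^ (p - 1)) • φ (-1)))
        + (I 0 - I (-1)) := by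
      rw [hsplit] at hkey
      rw [sub_eq_iff_eq_add] at hkey
      rw [hkey]; abel
    have ha2 : ‖φ (-1)‖ ≤ ε := hφ _ hmem1
    have ha1 : ε/2 < ‖φ (-1)‖ := hcase _ hmem1
    have hane : ‖φ (-1)‖ ≠ 0 := by
      have h : (0:ℝ) < ‖φ (-1)‖ := lt_of_le_of_lt (by linarith) ha1
      exact h.ne'
    have hb1 : ‖φ (-1) - (‖φ (-1)‖ ^ (p - 1)) • φ (-1)‖ ≤ ε - c := by
      have hc1 : ‖φ (-1)‖ ^ (p-1) ≤ 1 :=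
        Real.rpow_le_one (norm_nonneg _) (le_trans ha2 hε1) (by linarith)
      have hrw : φ (-1) - (‖φ (-1)‖ ^ (p - 1)) • φ (-1)
          = (1 - ‖φ (-1)‖ ^ (p-1)) • φ (-1) := by
        rw [sub_smul, one_smul]
      rw [hrw, norm_smul, Real.norm_eq_abs, abs_of_nonneg (by linarith)]
      have hpow : ‖φ (-1)‖ ^ (p-1) * ‖φ (-1)‖ = ‖φ (-1)‖ ^ p := by
        have h := Real.rpow_add_one hane (p-1)
        rw [sub_add_cancel] at h
        exact h.symm
      have hmono2 : c ≤ ‖φ (-1)‖ ^ p := by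
        rw [hcdef]
        exact Real.rpow_le_rpow (by linarith) ha1.le (by linarith)
      linarith only [hpow, hmono2, ha2]
    have hcden : c = ε^p/(2:ℝ)^p := by
      rw [hcdef]; exact Real.div_rpow hε0.le (by norm_num) p
    have ht1 : ε^(p-1)*(2*ε^p) ≤ c/12 := by
      rw [hcden]
      calc ε^(p-1)*(2*ε^p) = (2*ε^(p-1))*ε^p := by ring
      _ ≤ (2*(1/(24*(2:ℝ)^p)))*ε^p := by
          refine mul_le_mul_of_nonneg_right ?_ hεp0.le
          linarith only [h1']
      _ = ε^p/(2:ℝ)^p/12 := by ring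
    have ht2 : (2*ε^p)^(p-1)*ε ≤ c/12 := by
      have hexp : (2*ε^p)^(p-1) = (2:ℝ)^(p-1)*ε^(p*(p-1)) := by
        rw [Real.mul_rpow (by norm_num) hεp0.le, ← Real.rpow_mul hε0.le]
      have hexp2 : ε^(p*(p-1))*ε = ε^((p-1)^2)*ε^p := by
        rw [← Real.rpow_add_one hε0.ne' (p*(p-1)), ← Real.rpow_add hε0]
        congr 1
        ring
      calc (2*ε^p)^(p-1)*ε = ((2:ℝ)^(p-1)*ε^((p-1)^2))*ε^p := by
            rw [hexp, mul_assoc, hexp2]; ring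
      _ ≤ (1/(12*(2:ℝ)^p))*ε^p := mul_le_mul_of_nonneg_right h2'.le hεp0.le
      _ = c/12 := by rw [hcden]; ring
    have ht3 : (p-1)*(2*ε^p)*ε ≤ c/12 := by
      calc (p-1)*(2*ε^p)*ε = (2*(p-1)*ε)*ε^p := by ring
      _ ≤ (1/(12*(2:ℝ)^p))*ε^p := mul_le_mul_of_nonneg_right h3'.le hεp0.le
      _ = c/12 := by rw [hcden]; ring
    have hb2 : ‖∫ u in (-1:ℝ)..0,
        ((‖φ u‖ ^ (p - 1)) • φ u - (‖φ (-1)‖ ^ (p - 1)) • φ (-1))‖ ≤ c/4 := by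
      have hb := intervalIntegral.norm_integral_le_of_norm_le_const (C := c/4)
        (a := (-1:ℝ)) (b := 0)
        (f := fun u => ((‖φ u‖ ^ (p - 1)) • φ u - (‖φ (-1)‖ ^ (p - 1)) • φ (-1))) ?_
      · have h1 : |(0:ℝ) - (-1)| = 1 := by norm_num
        rw [h1, mul_one] at hb
        exact hb
      · intro u hu
        rw [Set.uIoc_of_le (by norm_num : (-1:ℝ) ≤ 0)] at hu
        have huS : u ∈ Set.Icc (-1:ℝ) 0 := ⟨hu.1.le, hu.2⟩
        have hρu : ‖φ u - φ (-1)‖ ≤ 2*ε^p := hosc2 (-1) u le_rfl hu.1.le hu.2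
        have hnu : ‖φ u‖ ≤ ε := hφ _ huS
        have hiden2 : (‖φ u‖ ^ (p - 1)) • φ u - (‖φ (-1)‖ ^ (p - 1)) • φ (-1)
            = (‖φ u‖ ^ (p - 1)) • (φ u - φ (-1)) +
              (‖φ u‖ ^ (p - 1) - ‖φ (-1)‖ ^ (p - 1)) • φ (-1) := by
          rw [smul_sub, sub_smul]; abel
        show ‖(‖φ u‖ ^ (p - 1)) • φ u - (‖φ (-1)‖ ^ (p - 1)) • φ (-1)‖ ≤ c/4
        rw [hiden2]
        have hT1 : ‖(‖φ u‖ ^ (p - 1)) • (φ u - φ (-1))‖ ≤ ε^(p-1) * (2*ε^p) := by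
          rw [norm_smul, Real.norm_eq_abs, abs_of_nonneg (Real.rpow_nonneg (norm_nonneg _) _)]
          exact mul_le_mul (Real.rpow_le_rpow (norm_nonneg _) hnu (by linarith)) hρu
            (norm_nonneg _) hεpm0
        have habs : |‖φ u‖ - ‖φ (-1)‖| ≤ 2*ε^p := le_trans (abs_norm_sub_norm_le _ _) hρu
        have hT2' : |‖φ u‖ ^ (p-1) - ‖φ (-1)‖ ^ (p-1)| ≤ (2*ε^p)^(p-1) + (p-1)*(2*ε^p) := by
          have h := aux_abs_rpow_sub (q := p-1) hp1 (norm_nonneg _) (le_trans hnu hε1)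
            (norm_nonneg _) (le_trans ha2 hε1)
          refine le_trans h (add_le_add ?_ ?_)
          · exact Real.rpow_le_rpow (abs_nonneg _) habs (by linarith)
          · exact mul_le_mul_of_nonneg_left habs (by linarith)
        have hT2 : ‖(‖φ u‖ ^ (p - 1) - ‖φ (-1)‖ ^ (p - 1)) • φ (-1)‖
            ≤ ((2*ε^p)^(p-1) + (p-1)*(2*ε^p)) * ε := by
          rw [norm_smul, Real.norm_eq_abs]
          refine mul_le_mul hT2' ha2 (norm_nonneg _) ?_
          have h0 : (0:ℝ) ≤ (2*ε^p)^(p-1) := Real.rpow_nonneg (by linarith only [hεp0]) _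
          linarith only [h0, mul_pos hp1 hεp0]
        refine le_trans (norm_add_le _ _) (le_trans (add_le_add hT1 hT2) ?_)
        have hexpand : ((2*ε^p)^(p-1) + (p-1)*(2*ε^p)) * ε
            = (2*ε^p)^(p-1)*ε + (p-1)*(2*ε^p)*ε := by ring
        rw [hexpand]
        linarith only [ht1, ht2, ht3]
    have hb3 : ‖I 0 - I (-1)‖ ≤ c/4 := by
      have hE := hGb (-1) 0 le_rfl (by norm_num) le_rfl
      have hone : ((0:ℝ) - (-1)) = 1 := by norm_num
      rw [hone, Real.one_rpow, mul_one] at hE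
      have hfX2 : ‖(f (φ (-1))) (X 0 - X (-1))‖ ≤ r := by
        calc ‖(f (φ (-1))) (X 0 - X (-1))‖ ≤ ‖f (φ (-1))‖ * ‖X 0 - X (-1)‖ :=
              ContinuousLinearMap.le_opNorm _ _
        _ ≤ fSup f * (holderSemi γ (Set.Icc (-1:ℝ) 0) X * ((0:ℝ) - (-1)) ^ γ) :=
              mul_le_mul (hfx _) (hXb (-1) 0 hmem1 hmem0 (by norm_num)) (norm_nonneg _) hKf0
        _ = fSup f * holderSemi γ (Set.Icc (-1:ℝ) 0) X := by
              rw [hone, Real.one_rpow, mul_one]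
        _ ≤ r := hKH
      have hdecomp : I 0 - I (-1) = (I 0 - I (-1) - (f (φ (-1))) (X 0 - X (-1)))
          + (f (φ (-1))) (X 0 - X (-1)) := (sub_add_cancel _ _).symm
      rw [hdecomp]
      refine le_trans (norm_add_le _ _) ?_
      linarith only [hE, hfX2, hrG]
    rw [hrep]
    have hfinal : ‖(φ (-1) - (‖φ (-1)‖ ^ (p - 1)) • φ (-1))
        - (∫ u in (-1:ℝ)..0, ((‖φ u‖ ^ (p - 1)) • φ u - (‖φ (-1)‖ ^ (p - 1)) • φ (-1)))
        + (I 0 - I (-1))‖ ≤ (ε - c) + c/4 + c/4 := by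
      refine le_trans (norm_add_le _ _) ?_
      exact add_le_add (le_trans (norm_sub_le _ _) (add_le_add hb1 hb2)) hb3
    linarith only [hfinal, hc0]


end Stmt8
end
end

section
/- Coming down from infinity for the coercive ODE: Let m ≥ 1 and p ∈ (1,∞). If y : [−1,0] → ℝ^m is differentiable and satisfies y'(t) = −|y(t)|^{p−1} y(t) for all t ∈ [−1,0], then for every t ∈ (−1,0] one has |y(t)| ≤ ((p−1)(t+1))^{−1/(p−1)}; in particular |y(0)| ≤ (p−1)^{−1/(p−1)}, independently of the initial condition y(−1). -/
noncomputable section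

open Set

/-- **Coming down from infinity for the coercive ODE** `y' = −|y|^{p−1} y` on `[−1,0]`:
for every `t ∈ (−1,0]` one has `|y(t)| ≤ ((p−1)(t+1))^{−1/(p−1)}`, and in particular
`|y(0)| ≤ (p−1)^{−1/(p−1)}`, independently of the initial condition `y(−1)`. -/
theorem coming_down_from_infinity
    (m : ℕ) (hm : 1 ≤ m) (p : ℝ) (hp : 1 < p)
    (y : ℝ → EuclideanSpace ℝ (Fin m))
    (hy : ∀ t ∈ Set.Icc (-1 : ℝ) 0,
      HasDerivWithinAt y (-((‖y t‖ ^ (p - 1)) • y t)) (Set.Icc (-1 : ℝ) 0) t) :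
    (∀ t ∈ Set.Ioc (-1 : ℝ) 0, ‖y t‖ ≤ ((p - 1) * (t + 1)) ^ (-(1 / (p - 1)))) ∧
      ‖y 0‖ ≤ (p - 1) ^ (-(1 / (p - 1))) := by
  have hp1 : (0:ℝ) < p - 1 := by linarith
  set S : Set ℝ := Set.Icc (-1 : ℝ) 0 with hS
  set f : ℝ → ℝ := fun t => ‖y t‖ ^ 2 with hfdef
  -- derivative of f
  have hf : ∀ t ∈ S, HasDerivWithinAt f (-(2 * ‖y t‖ ^ (p - 1)) * f t) S t := by
    intro t ht
    have h := HasDerivWithinAt.inner ℝ (hy t ht) (hy t ht)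
    have hfun : (fun s => (inner ℝ (y s) (y s) : ℝ)) = f := by
      funext s; rw [real_inner_self_eq_norm_sq]
    rw [hfun] at h
    refine h.congr_deriv ?_
    simp only [inner_neg_left, inner_neg_right, real_inner_smul_left, real_inner_smul_right,
      real_inner_self_eq_norm_sq]
    ring
  -- f is antitone on S
  have hanti : AntitoneOn f S := by
    apply antitoneOn_of_hasDerivWithinAt_nonpos (convex_Icc _ _)
      (fun t ht => (hf t ht).continuousWithinAt)
      (fun t ht => (hf t (interior_subset ht)).mono interior_subset)
    intro t ht
    have h1 : (0:ℝ) ≤ ‖y t‖ ^ (p - 1) := Real.rpow_nonneg (norm_nonneg _) _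
    have h2 : (0:ℝ) ≤ f t := by positivity
    nlinarith
  have key : ∀ t ∈ Set.Ioc (-1 : ℝ) 0, ‖y t‖ ≤ ((p - 1) * (t + 1)) ^ (-(1 / (p - 1))) := by
    intro t₀ ht₀
    obtain ⟨ht₀l, ht₀r⟩ := ht₀
    have ht₀S : t₀ ∈ S := ⟨le_of_lt ht₀l, ht₀r⟩
    have hc : (0:ℝ) < (p - 1) * (t₀ + 1) := by nlinarith
    by_cases hz : ‖y t₀‖ = 0
    · rw [hz]; exact Real.rpow_nonneg hc.le _
    have ha : 0 < ‖y t₀‖ := lt_of_le_of_ne (norm_nonneg _) (Ne.symm hz)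
    set T : Set ℝ := Set.Icc (-1 : ℝ) t₀ with hT
    have hTS : T ⊆ S := Set.Icc_subset_Icc le_rfl ht₀r
    -- f is positive on T
    have hfpos : ∀ s ∈ T, 0 < f s := by
      intro s hs
      have h1 : f t₀ ≤ f s := hanti (hTS hs) ht₀S hs.2
      have h2 : 0 < f t₀ := by simp only [hfdef]; positivity
      linarith
    have hnpos : ∀ s ∈ T, 0 < ‖y s‖ := by
      intro s hs
      have h2 := hfpos s hs
      have hne : ‖y s‖ ≠ 0 := by
        intro h0
        have hfs : f s = ‖y s‖ ^ 2 := rfl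
        rw [hfs, h0] at h2
        simp at h2
      exact lt_of_le_of_ne (norm_nonneg _) (Ne.symm hne)
    set r : ℝ := -((p - 1) / 2) with hr
    set w : ℝ → ℝ := fun s => f s ^ r with hw
    -- f s ^ r = ‖y s‖ ^ (-(p-1))
    have he1 : ∀ s, f s ^ r = ‖y s‖ ^ (-(p - 1)) := by
      intro s
      have hfs : f s = ‖y s‖ ^ 2 := rfl
      rw [hfs, ← Real.rpow_natCast (‖y s‖) 2, ← Real.rpow_mul (norm_nonneg _)]
      congr 1
      push_cast
      ring
    -- derivative of w on T is exactly p - 1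
    have hwderiv : ∀ s ∈ T, HasDerivWithinAt w (p - 1) T s := by
      intro s hs
      have hfs := hfpos s hs
      have hns := hnpos s hs
      have h := (((hf s (hTS hs)).mono hTS)).rpow_const (p := r) (Or.inl (ne_of_gt hfs))
      convert h using 1
      rw [Real.rpow_sub hfs r 1, Real.rpow_one]
      rw [he1 s]
      have hcomb : ‖y s‖ ^ (p - 1) * ‖y s‖ ^ (-(p - 1)) = 1 := by
        rw [← Real.rpow_add hns]; simp
      have hre : -(2 * ‖y s‖ ^ (p - 1)) * f s * r * (‖y s‖ ^ (-(p - 1)) / f s)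
          = (-(2 * r)) * (‖y s‖ ^ (p - 1) * ‖y s‖ ^ (-(p - 1))) * (f s / f s) := by ring
      rw [hre, hcomb, div_self (ne_of_gt hfs), hr]
      ring
    -- W = w - (p-1) * id has zero derivative on T, hence constant
    have hWderiv : ∀ s ∈ T, HasDerivWithinAt (fun u => w u - (p - 1) * u) (0:ℝ) T s := by
      intro s hs
      have h := (hwderiv s hs).sub ((hasDerivWithinAt_id s T).const_mul (p - 1))
      refine h.congr_deriv ?_
      ring
    have hTmem1 : (-1:ℝ) ∈ T := ⟨le_rfl, le_of_lt ht₀l⟩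
    have hTmem2 : t₀ ∈ T := ⟨le_of_lt ht₀l, le_rfl⟩
    have hconst := Convex.norm_image_sub_le_of_norm_hasDerivWithin_le
      (f := fun u => w u - (p - 1) * u) (f' := fun _ => (0:ℝ)) (C := 0)
      (fun s hs => hWderiv s hs) (fun s _ => by simp) (convex_Icc _ _) hTmem1 hTmem2
    simp only [norm_zero, zero_mul] at hconst
    have hWeq : w t₀ - (p - 1) * t₀ = w (-1) - (p - 1) * (-1) := by
      have h := norm_sub_eq_zero_iff.mp (le_antisymm hconst (norm_nonneg _))
      linarith [sub_eq_zero.mp (by linarith [h] : (w t₀ - (p - 1) * t₀) - (w (-1) - (p - 1) * (-1)) = 0)]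
    have hwge : (p - 1) * (t₀ + 1) ≤ w t₀ := by
      have hw1 : 0 ≤ w (-1) := Real.rpow_nonneg (le_of_lt (hfpos _ hTmem1)) _
      nlinarith [hWeq]
    -- convert the bound on w t₀ to the bound on ‖y t₀‖
    have hwt : w t₀ = ‖y t₀‖ ^ (-(p - 1)) := he1 t₀
    rw [hwt] at hwge
    have hzneg : -(1 / (p - 1)) ≤ 0 := neg_nonpos.mpr (by positivity)
    have hexp : (-(p - 1)) * (-(1 / (p - 1))) = 1 := by field_simp
    calc ‖y t₀‖ = (‖y t₀‖ ^ (-(p - 1))) ^ (-(1 / (p - 1))) := by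
          rw [← Real.rpow_mul ha.le, hexp, Real.rpow_one]
      _ ≤ ((p - 1) * (t₀ + 1)) ^ (-(1 / (p - 1))) :=
          Real.rpow_le_rpow_of_nonpos hc hwge hzneg
  refine ⟨key, ?_⟩
  have h0 := key 0 ⟨by norm_num, le_rfl⟩
  simpa using h0
end
end

section
/- Self-improvement of the a priori estimate under interpolation of Hölder–Besov exponents: Let d ≥ 2, m ≥ 1, p ∈ (1,∞), α = 2/(p−1), and let −2 < β ≤ γ ≤ 0; set ρ_β = α/(α+2+β) and ρ_γ = α/(α+2+γ). Let C ≥ 1, let ξ : cl Ω → ℝ^m be continuous, let φ : cl Ω → ℝ^m, and let z ∈ Ω with dist(z) > 0 and φ(z) ≠ 0. Suppose that |φ(z)| ≤ C · max{ ‖ξ‖_{C^β;z;μ_z}^{ρ_β} , dist(z)^{−α} } with μ_z = min{ C·|φ(z)|^{−1/α} , dist(z)/4 }. Then there exists a constant C' > 0, depending only on C, α, β, γ, such that |φ(z)| ≤ C' · max{ ‖ξ‖_{C^γ;z;μ_z}^{ρ_γ} , dist(z)^{−α} }. -/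
open MeasureTheory

noncomputable section

namespace Stmt11

/-- Parabolic norm `|x|_𝔰 = max(|x₀|^{1/2}, |x₁|, …, |x_{d-1}|)`. -/
def pNorm (d : ℕ) (x : Fin d → ℝ) : ℝ :=
  ⨆ i : Fin d, (if (i : ℕ) = 0 then Real.sqrt |x i| else |x i|)

/-- Parabolic dilation `λ ·_𝔰 x = (λ² x₀, λ x₁, …, λ x_{d-1})`. -/
def pScale (d : ℕ) (l : ℝ) (x : Fin d → ℝ) : Fin d → ℝ :=
  fun i => if (i : ℕ) = 0 then l ^ 2 * x i else l * x i

/-- `Ω = (−1,0) × (−1,1)^{d−1}`. -/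
def pDomain (d : ℕ) : Set (Fin d → ℝ) :=
  {x | ∀ i : Fin d, if (i : ℕ) = 0 then x i ∈ Set.Ioo (-1 : ℝ) 0 else x i ∈ Set.Ioo (-1 : ℝ) 1}

/-- Parabolic closure `cl Ω = [−1,0] × [−1,1]^{d−1}`. -/
def pClosure (d : ℕ) : Set (Fin d → ℝ) :=
  {x | ∀ i : Fin d, if (i : ℕ) = 0 then x i ∈ Set.Icc (-1 : ℝ) 0 else x i ∈ Set.Icc (-1 : ℝ) 1}

/-- Parabolic boundary `∂Ω = {z ∈ [−1,0) × [−1,1]^{d−1} : |z|_𝔰 = 1}`. -/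
def pBoundary (d : ℕ) : Set (Fin d → ℝ) :=
  {z | (∀ i : Fin d, if (i : ℕ) = 0 then z i ∈ Set.Ico (-1 : ℝ) 0
          else z i ∈ Set.Icc (-1 : ℝ) 1) ∧ pNorm d z = 1}

/-- Parabolic distance to the boundary `dist(z) = inf_{y ∈ ∂Ω} |z − y|_𝔰`. -/
def pDist (d : ℕ) (z : Fin d → ℝ) : ℝ :=
  sInf {r | ∃ y ∈ pBoundary d, r = pNorm d (fun i => z i - y i)}

/-- `T_{z,λ}(y) = z + λ ·_𝔰 y`. -/
def pMapT (d : ℕ) (z : Fin d → ℝ) (l : ℝ) (y : Fin d → ℝ) : Fin d → ℝ :=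
  fun i => z i + pScale d l y i

/-- `B_z(λ) = T_{z,λ}(Ω)`. -/
def pBall (d : ℕ) (z : Fin d → ℝ) (l : ℝ) : Set (Fin d → ℝ) :=
  pMapT d z l '' pDomain d

/-- Rescaled test function `ψ^λ_x(y) = λ^{−|𝔰|} ψ(λ^{−1} ·_𝔰 (y − x))`, with `|𝔰| = d + 1`. -/
def testScale (d : ℕ) (l : ℝ) (x : Fin d → ℝ) (ψ : (Fin d → ℝ) → ℝ) : (Fin d → ℝ) → ℝ :=
  fun y => (l ^ (d + 1))⁻¹ * ψ (pScale d l⁻¹ (fun i => y i - x i))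

/-- Partial derivative in the `i`-th coordinate direction. -/
def pd (d : ℕ) {E : Type*} [NormedAddCommGroup E] [NormedSpace ℝ E]
    (i : Fin d) (φ : (Fin d → ℝ) → E) : (Fin d → ℝ) → E :=
  fun x => deriv (fun t => φ (Function.update x i t)) (x i)

/-- Iterated multi-index partial derivative `D^k`. -/
def mderiv (d : ℕ) (k : Fin d → ℕ) (f : (Fin d → ℝ) → ℝ) : (Fin d → ℝ) → ℝ :=
  (List.finRange d).foldr (fun i g => (pd d i)^[k i] g) f

/-- Parabolic degree `|k|_𝔰 = 2 k₀ + k₁ + … + k_{d−1}`. -/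
def wdeg (d : ℕ) (k : Fin d → ℕ) : ℕ :=
  ∑ i : Fin d, (if (i : ℕ) = 0 then 2 else 1) * k i

/-- The class `𝒫^r` of smooth test functions compactly supported in `Ω` whose multi-index
derivatives of parabolic degree at most `r` are bounded by `1`. -/
def testP (d : ℕ) (r : ℕ) : Set ((Fin d → ℝ) → ℝ) :=
  {ψ | ContDiff ℝ (⊤ : ℕ∞) ψ ∧ HasCompactSupport ψ ∧ tsupport ψ ⊆ pDomain d ∧
    ∀ k : Fin d → ℕ, wdeg d k ≤ r → ∀ x, |mderiv d k ψ x| ≤ 1}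

/-- `r(β) = max{0, ⌊1 − β⌋}`. -/
def rIndex (β : ℝ) : ℕ := (⌊(1 : ℝ) - β⌋).toNat

/-- Pointwise localised Hölder–Besov norm `‖ξ‖_{β;x;h}`. -/
def locNorm (d m : ℕ) (β : ℝ) (ξ : (Fin d → ℝ) → EuclideanSpace ℝ (Fin m))
    (x : Fin d → ℝ) (h : ℝ) : ℝ :=
  sSup {v | ∃ ψ ∈ testP d (rIndex β), ∃ l ∈ Set.Ioo (0 : ℝ) h,
    v = l ^ (-β) * ‖∫ y, testScale d l x ψ y • ξ y‖}

/-- `‖ξ‖_{C^β;z;h} = sup_{y ∈ B_z(h)} ‖ξ‖_{β;y;h}`. -/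
def locCNorm (d m : ℕ) (β : ℝ) (ξ : (Fin d → ℝ) → EuclideanSpace ℝ (Fin m))
    (z : Fin d → ℝ) (h : ℝ) : ℝ :=
  sSup {v | ∃ y ∈ pBall d z h, v = locNorm d m β ξ y h}

/-- Heat operator `Lφ = ∂₀φ − Σ_{i≠0} ∂_i² φ` (first coordinate is time). -/
def heatOp (d : ℕ) {E : Type*} [NormedAddCommGroup E] [NormedSpace ℝ E]
    (φ : (Fin d → ℝ) → E) : (Fin d → ℝ) → E :=
  fun x => ∑ i : Fin d, if (i : ℕ) = 0 then pd d i φ x else -(pd d i (pd d i φ) x)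

/-- `φ` solves `Lφ = −φ^p + ξ` classically on `Ω`: it is continuous on `cl Ω`, C¹ in the time
variable and C² in the space variables on `Ω`, and the equation holds pointwise on `Ω`,
where `x^p := |x|^{p−1} x`. -/
def SolvesHeat (d m : ℕ) (p : ℝ)
    (ξ φ : (Fin d → ℝ) → EuclideanSpace ℝ (Fin m)) : Prop :=
  ContinuousOn φ (pClosure d) ∧
  (∀ y ∈ pDomain d, ∀ i : Fin d,
      DifferentiableAt ℝ (fun t => φ (Function.update y i t)) (y i)) ∧
  (∀ y ∈ pDomain d, ∀ i : Fin d, (i : ℕ) ≠ 0 →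
      DifferentiableAt ℝ (fun t => pd d i φ (Function.update y i t)) (y i)) ∧
  (∀ i : Fin d, ContinuousOn (pd d i φ) (pDomain d)) ∧
  (∀ i : Fin d, (i : ℕ) ≠ 0 → ContinuousOn (pd d i (pd d i φ)) (pDomain d)) ∧
  (∀ y ∈ pDomain d, heatOp d φ y = -((‖φ y‖ ^ (p - 1)) • φ y) + ξ y)

/-! ### Auxiliary lemmas -/

lemma pNorm_nonneg (d : ℕ) (x : Fin d → ℝ) : 0 ≤ pNorm d x := by
  unfold pNorm
  refine Real.iSup_nonneg fun i => ?_
  split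
  · exact Real.sqrt_nonneg _
  · exact abs_nonneg _

lemma pNorm_le (d : ℕ) (x : Fin d → ℝ) (a : ℝ) (ha : 0 ≤ a)
    (h : ∀ i : Fin d, (if (i : ℕ) = 0 then Real.sqrt |x i| else |x i|) ≤ a) :
    pNorm d x ≤ a := by unfold pNorm; exact Real.iSup_le h ha

lemma le_pNorm (d : ℕ) (x : Fin d → ℝ) (i : Fin d) :
    (if (i : ℕ) = 0 then Real.sqrt |x i| else |x i|) ≤ pNorm d x := by
  unfold pNorm
  exact le_ciSup (f := fun i : Fin d => if (i:ℕ) = 0 then Real.sqrt |x i| else |x i|)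
    (Set.Finite.bddAbove (Set.finite_range _)) i

lemma pDist_nonneg (d : ℕ) (z : Fin d → ℝ) : 0 ≤ pDist d z :=
  Real.sInf_nonneg (by rintro r ⟨y, hy, rfl⟩; exact pNorm_nonneg _ _)

lemma pDist_le (d : ℕ) (z y : Fin d → ℝ) (hy : y ∈ pBoundary d) :
    pDist d z ≤ pNorm d (fun i => z i - y i) :=
  csInf_le ⟨0, by rintro r ⟨y', hy', rfl⟩; exact pNorm_nonneg _ _⟩ ⟨y, hy, rfl⟩

lemma pDist_le_sqrt (d : ℕ) (hd : 0 < d) (z : Fin d → ℝ) (hz : z ∈ pDomain d) :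
    pDist d z ≤ Real.sqrt (z ⟨0, hd⟩ + 1) := by
  set i0 : Fin d := ⟨0, hd⟩ with hi0
  have hz0 : z i0 ∈ Set.Ioo (-1:ℝ) 0 := by simpa [hi0] using hz i0
  set y : Fin d → ℝ := fun i => if (i:ℕ) = 0 then -1 else z i with hy
  have hyb : y ∈ pBoundary d := by
    constructor
    · intro i
      by_cases h : (i:ℕ) = 0
      · simp only [hy, h, if_pos]
        constructor <;> norm_num
      · have := hz i; rw [if_neg h] at this ⊢
        simp only [hy, if_neg h]
        exact ⟨this.1.le, this.2.le⟩
    · apply le_antisymm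
      · apply pNorm_le _ _ _ zero_le_one
        intro i; by_cases h : (i:ℕ) = 0
        · simp [hy, h]
        · have := hz i; rw [if_neg h] at this
          simp only [hy, if_neg h]
          exact abs_le.2 ⟨this.1.le, this.2.le⟩
      · have := le_pNorm d y i0
        simpa [hy, hi0] using this
  refine (pDist_le d z y hyb).trans ?_
  apply pNorm_le _ _ _ (Real.sqrt_nonneg _)
  intro i; by_cases h : (i:ℕ) = 0
  · have hii : i = i0 := Fin.ext (by simp [h, hi0])
    subst hii
    simp only [hy, if_pos, h]
    rw [sub_neg_eq_add, abs_of_nonneg (by linarith [hz0.1] : (0:ℝ) ≤ z i0 + 1)]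
  · simp only [hy, if_neg h, sub_self, abs_zero]
    exact Real.sqrt_nonneg _

lemma pDist_le_one_sub (d : ℕ) (hd : 0 < d) (z : Fin d → ℝ) (hz : z ∈ pDomain d)
    (i : Fin d) (hi : (i:ℕ) ≠ 0) : pDist d z ≤ 1 - |z i| := by
  set i0 : Fin d := ⟨0, hd⟩ with hi0
  have hz0 : z i0 ∈ Set.Ioo (-1:ℝ) 0 := by simpa [hi0] using hz i0
  have hzi : z i ∈ Set.Ioo (-1:ℝ) 1 := by have := hz i; rwa [if_neg hi] at this
  have habszi : |z i| ≤ 1 := abs_le.2 ⟨hzi.1.le, hzi.2.le⟩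
  set s : ℝ := if 0 ≤ z i then 1 else -1 with hs
  have habs_s : |s| = 1 := by rw [hs]; split <;> norm_num
  set y : Fin d → ℝ := fun j => if j = i then s else z j with hy
  have habs : |z i - s| = 1 - |z i| := by
    rw [hs]; rcases le_or_gt 0 (z i) with h | h
    · rw [if_pos h, abs_of_nonneg h, abs_of_nonpos (by linarith [hzi.2])]; ring
    · rw [if_neg (not_le.2 h), abs_of_neg h, abs_of_nonneg (by linarith [hzi.1])]; ring
  have hyb : y ∈ pBoundary d := by
    constructor
    · intro j
      by_cases h : (j:ℕ) = 0
      · have hji : j ≠ i := fun hji => hi (hji ▸ h)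
        have := hz j; rw [if_pos h] at this ⊢
        simp only [hy, if_neg hji]
        exact ⟨this.1.le, this.2⟩
      · rw [if_neg h]
        by_cases hji : j = i
        · simp only [hy, if_pos hji, hs]; split <;> norm_num
        · have := hz j; rw [if_neg h] at this
          simp only [hy, if_neg hji]
          exact ⟨this.1.le, this.2.le⟩
    · apply le_antisymm
      · apply pNorm_le _ _ _ zero_le_one
        intro j; by_cases h : (j:ℕ) = 0
        · have hji : j ≠ i := fun hji => hi (hji ▸ h)
          have := hz j; rw [if_pos h] at this
          rw [if_pos h]
          simp only [hy, if_neg hji]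
          calc Real.sqrt |z j| ≤ Real.sqrt 1 :=
                Real.sqrt_le_sqrt (abs_le.2 ⟨by linarith [this.1], by linarith [this.2]⟩)
            _ = 1 := Real.sqrt_one
        · rw [if_neg h]
          by_cases hji : j = i
          · simp [hy, hji, habs_s]
          · have := hz j; rw [if_neg h] at this
            simp only [hy, if_neg hji]
            exact abs_le.2 ⟨this.1.le, this.2.le⟩
      · have := le_pNorm d y i
        rw [if_neg hi] at this
        simpa [hy, habs_s] using this
  refine (pDist_le d z y hyb).trans ?_
  apply pNorm_le _ _ _ (by linarith)
  intro j; by_cases h : (j:ℕ) = 0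
  · have hji : j ≠ i := fun hji => hi (hji ▸ h)
    rw [if_pos h]
    simp only [hy, if_neg hji, sub_self, abs_zero, Real.sqrt_zero]
    linarith
  · rw [if_neg h]
    by_cases hji : j = i
    · subst hji; simp only [hy, if_pos rfl]; rw [habs]
    · simp only [hy, if_neg hji, sub_self, abs_zero]; linarith

lemma pClosure_eq_pi (d : ℕ) : pClosure d =
    Set.pi Set.univ
      (fun i : Fin d => if (i:ℕ) = 0 then Set.Icc (-1:ℝ) 0 else Set.Icc (-1:ℝ) 1) := by
  ext x
  simp only [pClosure, Set.mem_setOf_eq, Set.mem_pi, Set.mem_univ, true_implies]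
  refine forall_congr' fun i => ?_
  by_cases h : (i:ℕ) = 0 <;> simp [h]

lemma isCompact_pClosure (d : ℕ) : IsCompact (pClosure d) := by
  rw [pClosure_eq_pi]
  exact isCompact_univ_pi fun i => by split <;> exact isCompact_Icc

lemma mapsTo_pClosure (d : ℕ) (hd : 0 < d) (z : Fin d → ℝ) (hz : z ∈ pDomain d)
    (μ l : ℝ) (hl : 0 < l) (hlμ : l ≤ μ) (hμD : μ ≤ pDist d z / 4)
    (y : Fin d → ℝ) (hy : y ∈ pBall d z μ) (a : Fin d → ℝ) (ha : a ∈ pDomain d) :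
    pMapT d y l a ∈ pClosure d := by
  obtain ⟨b, hb, rfl⟩ := hy
  have hD0 : 0 ≤ pDist d z := pDist_nonneg d z
  have hμ0 : 0 < μ := lt_of_lt_of_le hl hlμ
  intro i
  by_cases h : (i:ℕ) = 0
  · have hbi := hb i; have hai := ha i; have hzi := hz i
    rw [if_pos h] at hbi hai hzi ⊢
    have hval : pMapT d (pMapT d z μ b) l a i = z i + μ^2 * b i + l^2 * a i := by
      simp [pMapT, pScale, h]
    rw [hval]
    have hii : (⟨0, hd⟩ : Fin d) = i := Fin.ext (by simp [h])
    have hsq : pDist d z ^ 2 ≤ z i + 1 := by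
      have h1 : pDist d z ≤ Real.sqrt (z ⟨0, hd⟩ + 1) := pDist_le_sqrt d hd z hz
      rw [hii] at h1
      have h2 : pDist d z ^ 2 ≤ Real.sqrt (z i + 1) ^ 2 := by
        apply pow_le_pow_left₀ hD0 h1
      rwa [Real.sq_sqrt (by linarith [hzi.1])] at h2
    have hb1 : μ^2 * b i ≥ -(μ^2) := by nlinarith [sq_nonneg μ, hbi.1]
    have ha1 : l^2 * a i ≥ -(l^2) := by nlinarith [sq_nonneg l, hai.1]
    have hb2 : μ^2 * b i ≤ 0 := mul_nonpos_of_nonneg_of_nonpos (sq_nonneg μ) hbi.2.le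
    have ha2 : l^2 * a i ≤ 0 := mul_nonpos_of_nonneg_of_nonpos (sq_nonneg l) hai.2.le
    have hμ2 : μ^2 ≤ pDist d z^2/16 := by nlinarith
    have hl2 : l^2 ≤ μ^2 := by nlinarith
    constructor
    · linarith [hzi.1]
    · linarith [hzi.2]
  · have hbi := hb i; have hai := ha i; have hzi := hz i
    rw [if_neg h] at hbi hai hzi ⊢
    have hval : pMapT d (pMapT d z μ b) l a i = z i + μ * b i + l * a i := by
      simp [pMapT, pScale, h]
    rw [hval]
    have hDi : pDist d z ≤ 1 - |z i| := pDist_le_one_sub d hd z hz i h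
    have h1 : μ * b i ≤ μ := by nlinarith [hbi.2]
    have h2 : μ * b i ≥ -μ := by nlinarith [hbi.1]
    have h3 : l * a i ≤ l := by nlinarith [hai.2]
    have h4 : l * a i ≥ -l := by nlinarith [hai.1]
    have h5 : z i ≤ |z i| := le_abs_self _
    have h6 : -|z i| ≤ z i := neg_abs_le _
    constructor
    · linarith
    · linarith

lemma mderiv_zero (d : ℕ) (ψ : (Fin d → ℝ) → ℝ) : mderiv d 0 ψ = ψ := by
  unfold mderiv
  generalize List.finRange d = L
  induction L with
  | nil => rfl
  | cons a L ih =>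
      show (pd d a)^[(0 : Fin d → ℕ) a]
        (List.foldr (fun i g => (pd d i)^[(0 : Fin d → ℕ) i] g) ψ L) = ψ
      rw [show (0 : Fin d → ℕ) a = 0 from rfl, Function.iterate_zero_apply, ih]

lemma integral_bound (d m : ℕ) (hd : 0 < d) (r : ℕ)
    (ξ : (Fin d → ℝ) → EuclideanSpace ℝ (Fin m)) (hξ : ContinuousOn ξ (pClosure d))
    (M : ℝ) (hM0 : 0 ≤ M) (hM : ∀ w ∈ pClosure d, ‖ξ w‖ ≤ M)
    (x : Fin d → ℝ) (l : ℝ) (hl : 0 < l)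
    (ψ : (Fin d → ℝ) → ℝ) (hψ : ψ ∈ testP d r)
    (hsupp : ∀ a ∈ pDomain d, pMapT d x l a ∈ pClosure d) :
    ‖∫ y, testScale d l x ψ y • ξ y‖ ≤ 2 ^ d * M := by
  have hl2 : (0:ℝ) < l^2 := by positivity
  set B : Set (Fin d → ℝ) := Set.pi Set.univ
    (fun i => Set.Ioo (x i - (if (i:ℕ) = 0 then l^2 else l))
      (x i + (if (i:ℕ) = 0 then 0 else l))) with hB
  have hiff : ∀ y, y ∈ B ↔ pScale d l⁻¹ (fun i => y i - x i) ∈ pDomain d := by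
    intro y
    simp only [hB, Set.mem_pi, Set.mem_univ, true_implies, pDomain, Set.mem_setOf_eq]
    refine forall_congr' fun i => ?_
    by_cases h : (i:ℕ) = 0
    · rw [if_pos h, if_pos h, if_pos h]
      simp only [pScale, if_pos h, Set.mem_Ioo]
      rw [show (l⁻¹)^2 * (y i - x i) = (y i - x i) / l^2 by
        rw [div_eq_inv_mul, inv_pow]]
      rw [lt_div_iff₀ hl2, div_lt_iff₀ hl2]
      constructor <;> rintro ⟨h1, h2⟩ <;> constructor <;> nlinarith
    · rw [if_neg h, if_neg h, if_neg h]
      simp only [pScale, if_neg h, Set.mem_Ioo]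
      rw [show l⁻¹ * (y i - x i) = (y i - x i) / l by rw [div_eq_inv_mul]]
      rw [lt_div_iff₀ hl, div_lt_iff₀ hl]
      constructor <;> rintro ⟨h1, h2⟩ <;> constructor <;> nlinarith
  have hrecon : ∀ y : Fin d → ℝ, pMapT d x l (pScale d l⁻¹ (fun i => y i - x i)) = y := by
    intro y; funext i
    by_cases h : (i:ℕ) = 0 <;> simp only [pMapT, pScale, if_pos, if_neg, h, ↓reduceIte] <;>
      field_simp <;> ring
  have hBsub : B ⊆ pClosure d := by
    intro y hy
    have ha := (hiff y).1 hy
    rw [← hrecon y]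
    exact hsupp _ ha
  have hzero : ∀ y, y ∉ B → testScale d l x ψ y • ξ y = 0 := by
    intro y hy
    have hψ0 : ψ (pScale d l⁻¹ (fun i => y i - x i)) = 0 := by
      by_contra hne
      exact hy ((hiff y).2 (hψ.2.2.1 (subset_tsupport _ (Function.mem_support.2 hne))))
    simp [testScale, hψ0]
  have hBmeas : MeasurableSet B := MeasurableSet.univ_pi fun i => measurableSet_Ioo
  have hcont : ContinuousOn (fun y => testScale d l x ψ y • ξ y) B := by
    apply ContinuousOn.smul (f := fun y => testScale d l x ψ y) (g := ξ)
    · apply Continuous.continuousOn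
      have hinner : Continuous (fun y : Fin d → ℝ => pScale d l⁻¹ (fun i => y i - x i)) := by
        apply continuous_pi; intro i
        unfold pScale; dsimp only
        split <;> exact continuous_const.mul ((continuous_apply i).sub continuous_const)
      exact continuous_const.mul (hψ.1.continuous.comp hinner)
    · exact hξ.mono hBsub
  have hbound : ∀ y ∈ B, ‖testScale d l x ψ y • ξ y‖ ≤ (l^(d+1))⁻¹ * M := by
    intro y hy
    rw [norm_smul]
    have h1 : ‖testScale d l x ψ y‖ ≤ (l^(d+1))⁻¹ := by
      rw [Real.norm_eq_abs, testScale, abs_mul, abs_inv, abs_pow, abs_of_pos hl]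
      have hb := hψ.2.2.2 0 (by simp [wdeg]) (pScale d l⁻¹ fun i => y i - x i)
      rw [mderiv_zero] at hb
      calc (l^(d+1))⁻¹ * |ψ (pScale d l⁻¹ fun i => y i - x i)|
          ≤ (l^(d+1))⁻¹ * 1 := by
            apply mul_le_mul_of_nonneg_left hb (by positivity)
        _ = (l^(d+1))⁻¹ := mul_one _
    have h2 : ‖ξ y‖ ≤ M := hM y (hBsub hy)
    exact mul_le_mul h1 h2 (norm_nonneg _) (by positivity)
  have hvol : volume B = ENNReal.ofReal (l^2 * (2*l)^(d-1)) := by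
    rw [hB, volume_pi_pi]
    have hv : ∀ i : Fin d,
        volume (Set.Ioo (x i - (if (i:ℕ) = 0 then l^2 else l))
          (x i + (if (i:ℕ) = 0 then 0 else l)))
          = ENNReal.ofReal (if (i:ℕ) = 0 then l^2 else 2*l) := by
      intro i; rw [Real.volume_Ioo]; congr 1; split <;> ring
    simp_rw [hv]
    rw [← ENNReal.ofReal_prod_of_nonneg (fun i _ => by split <;> positivity)]
    congr 1
    have hmem : (⟨0, hd⟩ : Fin d) ∈ Finset.univ := Finset.mem_univ _
    rw [← Finset.mul_prod_erase Finset.univ _ hmem]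
    rw [if_pos rfl]
    congr 1
    rw [Finset.prod_congr rfl
      (fun i hi => if_neg (fun h => (Finset.mem_erase.1 hi).1 (Fin.ext h)))]
    rw [Finset.prod_const, Finset.card_erase_of_mem hmem, Finset.card_univ,
      Fintype.card_fin]
  have hfin : volume B < ⊤ := by rw [hvol]; exact ENNReal.ofReal_lt_top
  have hmain := norm_setIntegral_le_of_norm_le_const hfin hbound
  rw [setIntegral_eq_integral_of_forall_compl_eq_zero hzero] at hmain
  refine hmain.trans ?_
  rw [measureReal_def, hvol, ENNReal.toReal_ofReal (by positivity)]
  obtain ⟨e, rfl⟩ : ∃ e, d = e + 1 := ⟨d - 1, by omega⟩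
  have hde : e + 1 - 1 = e := by omega
  rw [hde]
  have heq : (l^(e+1+1))⁻¹ * M * (l^2 * (2*l)^e) = 2^e * M := by
    field_simp
    ring
  rw [heq, pow_succ]
  nlinarith [pow_pos (by norm_num : (0:ℝ) < 2) e]

lemma locNorm_nonneg (d m : ℕ) (β : ℝ) (ξ : (Fin d → ℝ) → EuclideanSpace ℝ (Fin m))
    (x : Fin d → ℝ) (h : ℝ) : 0 ≤ locNorm d m β ξ x h := by
  apply Real.sSup_nonneg
  rintro v ⟨ψ, hψ, l, hl, rfl⟩
  exact mul_nonneg (Real.rpow_nonneg hl.1.le _) (norm_nonneg _)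

lemma locCNorm_nonneg (d m : ℕ) (β : ℝ) (ξ : (Fin d → ℝ) → EuclideanSpace ℝ (Fin m))
    (z : Fin d → ℝ) (h : ℝ) : 0 ≤ locCNorm d m β ξ z h := by
  apply Real.sSup_nonneg
  rintro v ⟨y, hy, rfl⟩
  exact locNorm_nonneg d m β ξ y h

lemma rIndex_mono {β γ : ℝ} (h : β ≤ γ) : rIndex γ ≤ rIndex β :=
  Int.toNat_le_toNat (Int.floor_le_floor (by linarith))

lemma testP_mono (d : ℕ) {r r' : ℕ} (h : r' ≤ r) : testP d r ⊆ testP d r' :=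
  fun ψ ⟨h1, h2, h3, h4⟩ => ⟨h1, h2, h3, fun k hk => h4 k (hk.trans h)⟩

lemma interp (d m : ℕ) (hd : 0 < d) (β γ : ℝ) (hβγ : β ≤ γ) (hγ : γ ≤ 0)
    (ξ : (Fin d → ℝ) → EuclideanSpace ℝ (Fin m)) (hξ : ContinuousOn ξ (pClosure d))
    (z : Fin d → ℝ) (hz : z ∈ pDomain d)
    (μ : ℝ) (hμ0 : 0 < μ) (hμD : μ ≤ pDist d z / 4) :
    locCNorm d m β ξ z μ ≤ μ ^ (γ - β) * locCNorm d m γ ξ z μ := by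
  obtain ⟨M0, hM0⟩ := (isCompact_pClosure d).exists_bound_of_continuousOn hξ
  set M := max M0 0 with hMdef
  have hM : ∀ w ∈ pClosure d, ‖ξ w‖ ≤ M := fun w hw => (hM0 w hw).trans (le_max_left _ _)
  set K : ℝ := μ ^ (-γ) * (2 ^ d * M) with hKdef
  have hK0 : 0 ≤ K :=
    mul_nonneg (Real.rpow_nonneg hμ0.le _)
      (mul_nonneg (by positivity) (le_max_right _ _))
  have helt : ∀ y ∈ pBall d z μ, ∀ ψ ∈ testP d (rIndex γ), ∀ l ∈ Set.Ioo (0:ℝ) μ,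
      l ^ (-γ) * ‖∫ t, testScale d l y ψ t • ξ t‖ ≤ K := by
    intro y hy ψ hψ l hl
    have hint := integral_bound d m hd (rIndex γ) ξ hξ M (le_max_right _ _) hM y l hl.1 ψ hψ
      (fun a ha => mapsTo_pClosure d hd z hz μ l hl.1 hl.2.le hμD y hy a ha)
    have h1 : l ^ (-γ) ≤ μ ^ (-γ) :=
      Real.rpow_le_rpow hl.1.le hl.2.le (by linarith)
    exact mul_le_mul h1 hint (norm_nonneg _) (Real.rpow_nonneg hμ0.le _)
  have hbddγ : ∀ y ∈ pBall d z μ, BddAbove {v | ∃ ψ ∈ testP d (rIndex γ),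
      ∃ l ∈ Set.Ioo (0:ℝ) μ, v = l ^ (-γ) * ‖∫ t, testScale d l y ψ t • ξ t‖} := by
    intro y hy
    refine ⟨K, ?_⟩
    rintro v ⟨ψ, hψ, l, hl, rfl⟩
    exact helt y hy ψ hψ l hl
  have hlocγ : ∀ y ∈ pBall d z μ, locNorm d m γ ξ y μ ≤ K := by
    intro y hy
    apply Real.sSup_le _ hK0
    rintro v ⟨ψ, hψ, l, hl, rfl⟩
    exact helt y hy ψ hψ l hl
  have hbddC : BddAbove {v | ∃ y ∈ pBall d z μ, v = locNorm d m γ ξ y μ} := by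
    refine ⟨K, ?_⟩
    rintro v ⟨y, hy, rfl⟩
    exact hlocγ y hy
  have hRHS0 : 0 ≤ μ ^ (γ - β) * locCNorm d m γ ξ z μ :=
    mul_nonneg (Real.rpow_nonneg hμ0.le _) (locCNorm_nonneg d m γ ξ z μ)
  apply Real.sSup_le _ hRHS0
  rintro v ⟨y, hy, rfl⟩
  apply Real.sSup_le _ hRHS0
  rintro v ⟨ψ, hψ, l, hl, rfl⟩
  have hψγ : ψ ∈ testP d (rIndex γ) := testP_mono d (rIndex_mono hβγ) hψ
  have h1 : l ^ (-γ) * ‖∫ t, testScale d l y ψ t • ξ t‖ ≤ locNorm d m γ ξ y μ :=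
    le_csSup (hbddγ y hy) ⟨ψ, hψγ, l, hl, rfl⟩
  have h2 : locNorm d m γ ξ y μ ≤ locCNorm d m γ ξ z μ := le_csSup hbddC ⟨y, hy, rfl⟩
  have h3 : l ^ (-β) = l ^ (γ - β) * l ^ (-γ) := by
    rw [← Real.rpow_add hl.1]
    congr 1
    ring
  rw [h3, mul_assoc]
  exact mul_le_mul (Real.rpow_le_rpow hl.1.le hl.2.le (by linarith)) (h1.trans h2)
    (mul_nonneg (Real.rpow_nonneg hl.1.le _) (norm_nonneg _))
    (Real.rpow_nonneg hμ0.le _)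

/-- **Self-improvement of the a priori estimate under interpolation of Hölder–Besov
exponents.** The constant `C'` depends only on `C`, `α`, `β`, `γ` (in particular it is
uniform in the dimensions `d`, `m` and in the functions `ξ`, `φ` and the point `z`). -/
theorem interpolation_self_improvement
    (p β γ : ℝ) (hp : 1 < p) (hβ2 : (-2 : ℝ) < β) (hβγ : β ≤ γ) (hγ : γ ≤ 0)
    (α ρβ ργ : ℝ) (hα : α = 2 / (p - 1))
    (hρβ : ρβ = α / (α + 2 + β)) (hργ : ργ = α / (α + 2 + γ))
    (C : ℝ) (hC : 1 ≤ C) :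
    ∃ C' : ℝ, 0 < C' ∧
      ∀ d m : ℕ, 2 ≤ d → 1 ≤ m →
      ∀ ξ φ : (Fin d → ℝ) → EuclideanSpace ℝ (Fin m),
        ContinuousOn ξ (pClosure d) →
        ∀ z ∈ pDomain d, 0 < pDist d z → φ z ≠ 0 →
        ∀ μ : ℝ, μ = min (C * ‖φ z‖ ^ (-(1 / α))) (pDist d z / 4) →
        ‖φ z‖ ≤ C * max ((locCNorm d m β ξ z μ) ^ ρβ) ((pDist d z) ^ (-α)) →
        ‖φ z‖ ≤ C' * max ((locCNorm d m γ ξ z μ) ^ ργ) ((pDist d z) ^ (-α))     := by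
  have hp1 : 0 < p - 1 := by linarith
  have hα0 : 0 < α := by rw [hα]; positivity
  have hdenβ : 0 < α + 2 + β := by linarith
  have hdenγ : 0 < α + 2 + γ := by linarith
  have hρβ0 : 0 < ρβ := by rw [hρβ]; positivity
  have hC0 : 0 < C := by linarith
  set e : ℝ := (γ - β) * ρβ with hedef
  set s : ℝ := (γ - β) * ρβ / α with hsdef
  have he0 : 0 ≤ e := mul_nonneg (by linarith) hρβ0.le
  have hs0 : 0 ≤ s := div_nonneg he0 hα0.le
  have h1s : 0 < 1 + s := by linarith
  have hseq : ρβ / (1 + s) = ργ := by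
    have key : ρβ = ργ * (1 + s) := by
      rw [hsdef, hρβ, hργ]
      field_simp
      ring
    rw [key, mul_div_cancel_right₀ _ h1s.ne']
  set A : ℝ := C * C ^ e with hAdef
  have hA0 : 0 < A := mul_pos hC0 (Real.rpow_pos_of_pos hC0 _)
  set C' : ℝ := max C (A ^ (1 / (1 + s))) with hC'def
  have hCC' : C ≤ C' := le_max_left _ _
  have hC'0 : 0 < C' := lt_of_lt_of_le (by linarith : (0:ℝ) < C) hCC'
  refine ⟨C', hC'0, ?_⟩
  intro d m hd hm ξ φ hξ z hz hD hφ μ hμ hyp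
  set F := ‖φ z‖ with hFdef
  have hF0 : 0 < F := norm_pos_iff.2 hφ
  have hμ0 : 0 < μ := by
    rw [hμ]
    apply lt_min
    · exact mul_pos hC0 (Real.rpow_pos_of_pos hF0 _)
    · linarith
  have hμD : μ ≤ pDist d z / 4 := by rw [hμ]; exact min_le_right _ _
  have hμF : μ ≤ C * F ^ (-(1 / α)) := by rw [hμ]; exact min_le_left _ _
  set N := locCNorm d m γ ξ z μ with hNdef
  have hN0 : 0 ≤ N := locCNorm_nonneg d m γ ξ z μ
  have hNβ0 : 0 ≤ locCNorm d m β ξ z μ := locCNorm_nonneg d m β ξ z μ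
  have hinterp : locCNorm d m β ξ z μ ≤ μ ^ (γ - β) * N :=
    interp d m (by omega) β γ hβγ hγ ξ hξ z hz μ hμ0 hμD
  have hDα0 : 0 ≤ pDist d z ^ (-α) := Real.rpow_nonneg (pDist_nonneg d z) _
  rcases le_total (locCNorm d m β ξ z μ ^ ρβ) (pDist d z ^ (-α)) with hcase | hcase
  · rw [max_eq_right hcase] at hyp
    refine hyp.trans ?_
    exact mul_le_mul hCC' (le_max_right _ _) hDα0 hC'0.le
  · rw [max_eq_left hcase] at hyp
    have h1 : F ≤ C * (μ ^ (γ - β) * N) ^ ρβ := by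
      refine hyp.trans (mul_le_mul_of_nonneg_left ?_ hC0.le)
      exact Real.rpow_le_rpow hNβ0 hinterp hρβ0.le
    have h2 : (μ ^ (γ - β) * N) ^ ρβ = μ ^ e * N ^ ρβ := by
      rw [Real.mul_rpow (Real.rpow_nonneg hμ0.le _) hN0, ← Real.rpow_mul hμ0.le]
    have h3 : μ ^ e ≤ C ^ e * F ^ (-s) := by
      calc μ ^ e ≤ (C * F ^ (-(1 / α))) ^ e := Real.rpow_le_rpow hμ0.le hμF he0
        _ = C ^ e * (F ^ (-(1 / α))) ^ e :=
            Real.mul_rpow hC0.le (Real.rpow_nonneg hF0.le _)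
        _ = C ^ e * F ^ (-(1 / α) * e) := by rw [← Real.rpow_mul hF0.le]
        _ = C ^ e * F ^ (-s) := by
            congr 1
            rw [hsdef, hedef]
            field_simp
    have h4 : F ≤ A * F ^ (-s) * N ^ ρβ := by
      calc F ≤ C * (μ ^ e * N ^ ρβ) := h2 ▸ h1
        _ ≤ C * ((C ^ e * F ^ (-s)) * N ^ ρβ) := by
            apply mul_le_mul_of_nonneg_left _ hC0.le
            exact mul_le_mul_of_nonneg_right h3 (Real.rpow_nonneg hN0 _)
        _ = A * F ^ (-s) * N ^ ρβ := by rw [hAdef]; ring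
    have h5 : F ^ (1 + s) ≤ A * N ^ ρβ := by
      have h5a := mul_le_mul_of_nonneg_right h4 (Real.rpow_nonneg hF0.le s)
      calc F ^ (1 + s) = F * F ^ s := by rw [Real.rpow_add hF0, Real.rpow_one]
        _ ≤ A * F ^ (-s) * N ^ ρβ * F ^ s := h5a
        _ = A * N ^ ρβ * (F ^ (-s) * F ^ s) := by ring
        _ = A * N ^ ρβ := by
            rw [← Real.rpow_add hF0]
            simp
    have h6 : F ≤ A ^ (1 / (1 + s)) * N ^ ργ := by
      have h6a := Real.rpow_le_rpow (Real.rpow_nonneg hF0.le _) h5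
        (by positivity : (0:ℝ) ≤ 1 / (1 + s))
      rw [← Real.rpow_mul hF0.le, mul_one_div, div_self h1s.ne', Real.rpow_one] at h6a
      refine h6a.trans (le_of_eq ?_)
      rw [Real.mul_rpow hA0.le (Real.rpow_nonneg hN0 _), ← Real.rpow_mul hN0,
        mul_one_div, hseq]
    refine h6.trans ?_
    exact mul_le_mul (le_max_right _ _) (le_max_left _ _)
      (Real.rpow_nonneg hN0 _) hC'0.le


end Stmt11
end
end
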